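/- Let X be a commutative unital normed quasi-algebra with Hausdorff metric h. Then the inversion map x ↦ x⁻¹ is a homeomorphism of G(X) onto itself with respect to the topology induced by h; concretely, it is a bijection of G(X) equal to its own inverse, and for every x ∈ G(X) and ε > 0 there exists δ > 0 such that for all y ∈ G(X), h(x, y) < δ implies h(x⁻¹, y⁻¹) < ε. -/

import Mathlib

/-- A quasi-algebra in the sense of Aseev/Dehghanizade–Modarres: a partially
ordered set with addition, zero, real scalar multiplication and a product. -/
structure QuasiAlgebra (X : Type*) [PartialOrder X] where
  add : X → X → X
  zero : X
  smul : ℝ → X → X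
  mul : X → X → X
  add_comm : ∀ x y, add x y = add y x
  add_assoc : ∀ x y z, add x (add y z) = add (add x y) z
  add_zero : ∀ x, add x zero = x
  smul_smul : ∀ (α β : ℝ) (x : X), smul α (smul β x) = smul (α * β) x
  smul_add : ∀ (α : ℝ) (x y : X), smul α (add x y) = add (smul α x) (smul α y)
  one_smul : ∀ x, smul 1 x = x
  zero_smul : ∀ x, smul 0 x = zero
  add_smul_le : ∀ (α β : ℝ) (x : X), smul (α + β) x ≤ add (smul α x) (smul β x)
  add_le_add : ∀ {x y z v : X}, x ≤ y → z ≤ v → add x z ≤ add y v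
  smul_le_smul : ∀ (α : ℝ) {x y : X}, x ≤ y → smul α x ≤ smul α y
  mul_assoc : ∀ x y z, mul x (mul y z) = mul (mul x y) z
  smul_mul : ∀ (α : ℝ) (x y : X), smul α (mul x y) = mul (smul α x) y
  mul_smul : ∀ (α : ℝ) (x y : X), smul α (mul x y) = mul x (smul α y)
  zero_mul_zero : mul zero zero = zero
  mul_add_le : ∀ x y z, mul x (add y z) ≤ add (mul x y) (mul x z)
  add_mul_le : ∀ x y z, mul (add x y) z ≤ add (mul x z) (mul y z)
  mul_le_mul : ∀ {x y z v : X}, x ≤ y → z ≤ v → mul x z ≤ mul y v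

namespace QuasiAlgebra

variable {X : Type*} [PartialOrder X]

/-- `-x = (-1)·x`. -/
def neg (Q : QuasiAlgebra X) (x : X) : X := Q.smul (-1) x

/-- `x - y = x + (-y)`. -/
def sub (Q : QuasiAlgebra X) (x y : X) : X := Q.add x (Q.neg y)

/-- An element is regular if it has an additive inverse. -/
def Regular (Q : QuasiAlgebra X) (x : X) : Prop := ∃ x' : X, Q.add x x' = Q.zero

/-- A norm on a quasi-algebra. -/
structure Norm (Q : QuasiAlgebra X) where
  norm : X → ℝ
  norm_pos : ∀ {x : X}, x ≠ Q.zero → 0 < norm x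
  norm_add : ∀ x y, norm (Q.add x y) ≤ norm x + norm y
  norm_smul : ∀ (α : ℝ) (x : X), norm (Q.smul α x) = |α| * norm x
  norm_mul : ∀ x y, norm (Q.mul x y) ≤ norm x * norm y
  norm_mono : ∀ {x y : X}, x ≤ y → norm x ≤ norm y
  le_of_forall_eps : ∀ {x y : X},
    (∀ ε : ℝ, 0 < ε → ∃ z : X, x ≤ Q.add y z ∧ norm z ≤ ε) → x ≤ y

/-- The Hausdorff metric of a normed quasi-algebra. -/
noncomputable def hmet (Q : QuasiAlgebra X) (N : Q.Norm) (x y : X) : ℝ :=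
  sInf {r : ℝ | 0 ≤ r ∧ ∃ a₁ a₂ : X,
    x ≤ Q.add y a₁ ∧ y ≤ Q.add x a₂ ∧ N.norm a₁ ≤ r ∧ N.norm a₂ ≤ r}

end QuasiAlgebra

/-! For units `x`, `y` of a commutative quasi-algebra, `x⁻¹y⁻¹x = y⁻¹` and `x⁻¹y⁻¹y = x⁻¹`, so
multiplying `x ≤ y + a` by `x⁻¹y⁻¹` gives `y⁻¹ ≤ x⁻¹ + x⁻¹y⁻¹a`: hence
`h(x⁻¹, y⁻¹) ≤ ‖x⁻¹‖‖y⁻¹‖ h(x, y)`. The same inequality bounds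
`‖y⁻¹‖ ≤ ‖x⁻¹‖ + ‖x⁻¹‖‖y⁻¹‖ h(x, y)`, so `‖y⁻¹‖ ≤ 2‖x⁻¹‖` once `h(x, y)` is small, and inversion is
locally Lipschitz. Uniqueness of inverses makes inversion an involution of the units. -/

namespace QuasiAlgebra

variable {X : Type*} [PartialOrder X] {Q : QuasiAlgebra X}

theorem mul_le_add_mul {c x y a : X} (h : x ≤ Q.add y a) :
    Q.mul c x ≤ Q.add (Q.mul c y) (Q.mul c a) :=
  (Q.mul_le_mul le_rfl h).trans (Q.mul_add_le c y a)

namespace Norm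

variable (N : Q.Norm)

theorem norm_zero : N.norm Q.zero = 0 := by
  simpa [Q.zero_smul] using N.norm_smul 0 Q.zero

theorem norm_nonneg (x : X) : 0 ≤ N.norm x := by
  rcases eq_or_ne x Q.zero with rfl | hx
  · exact N.norm_zero.ge
  · exact (N.norm_pos hx).le

end Norm

section Hausdorff

variable (N : Q.Norm)

def HClose (x y : X) (r : ℝ) : Prop :=
  ∃ a₁ a₂ : X, x ≤ Q.add y a₁ ∧ y ≤ Q.add x a₂ ∧ N.norm a₁ ≤ r ∧ N.norm a₂ ≤ r

variable {N} {x y : X} {r s : ℝ}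

theorem HClose.nonneg (h : HClose N x y r) : 0 ≤ r := by
  obtain ⟨a₁, -, -, -, ha₁, -⟩ := h
  exact (N.norm_nonneg a₁).trans ha₁

theorem HClose.symm (h : HClose N x y r) : HClose N y x r := by
  obtain ⟨a₁, a₂, h₁, h₂, ha₁, ha₂⟩ := h
  exact ⟨a₂, a₁, h₂, h₁, ha₂, ha₁⟩

theorem HClose.mono (h : HClose N x y r) (hrs : r ≤ s) : HClose N x y s := by
  obtain ⟨a₁, a₂, h₁, h₂, ha₁, ha₂⟩ := h
  exact ⟨a₁, a₂, h₁, h₂, ha₁.trans hrs, ha₂.trans hrs⟩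

theorem HClose.norm_le (h : HClose N x y r) : N.norm y ≤ N.norm x + r := by
  obtain ⟨-, a₂, -, h₂, -, ha₂⟩ := h
  calc N.norm y ≤ N.norm (Q.add x a₂) := N.norm_mono h₂
    _ ≤ N.norm x + N.norm a₂ := N.norm_add x a₂
    _ ≤ N.norm x + r := by linarith

theorem HClose.mul_left (h : HClose N x y r) (c : X) :
    HClose N (Q.mul c x) (Q.mul c y) (N.norm c * r) := by
  obtain ⟨a₁, a₂, h₁, h₂, ha₁, ha₂⟩ := h
  have bound (a : X) (ha : N.norm a ≤ r) : N.norm (Q.mul c a) ≤ N.norm c * r :=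
    (N.norm_mul c a).trans (mul_le_mul_of_nonneg_left ha (N.norm_nonneg c))
  exact ⟨Q.mul c a₁, Q.mul c a₂, mul_le_add_mul h₁, mul_le_add_mul h₂, bound a₁ ha₁,
    bound a₂ ha₂⟩

theorem hmet_le (h : HClose N x y r) : Q.hmet N x y ≤ r :=
  csInf_le ⟨0, fun _ hs => hs.1⟩ ⟨h.nonneg, h⟩

theorem exists_hClose_lt_of_hmet_lt {δ : ℝ} (hne : ∃ r, HClose N x y r)
    (hδ : Q.hmet N x y < δ) : ∃ r < δ, HClose N x y r := by
  obtain ⟨r, hr⟩ := hne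
  obtain ⟨s, ⟨-, hs⟩, hsδ⟩ := exists_lt_of_csInf_lt
    (s := {r | 0 ≤ r ∧ HClose N x y r}) ⟨r, hr.nonneg, hr⟩ hδ
  exact ⟨s, hsδ, hs⟩

theorem hmet_eq_zero_of_forall_not_hClose (h : ∀ r, ¬HClose N x y r) : Q.hmet N x y = 0 := by
  have hempty : {r : ℝ | 0 ≤ r ∧ HClose N x y r} = ∅ :=
    Set.eq_empty_iff_forall_notMem.2 fun r hr => h r hr.2
  exact (congrArg sInf hempty).trans Real.sInf_empty

end Hausdorff

section Units

variable {one : X}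

theorem eq_of_mul_eq_one (hone : ∀ x : X, Q.mul one x = x ∧ Q.mul x one = x) {x a b : X}
    (ha : Q.mul x a = one) (hb : Q.mul b x = one) : a = b :=
  calc a = Q.mul (Q.mul b x) a := by rw [hb, (hone a).1]
    _ = b := by rw [← Q.mul_assoc, ha, (hone b).2]

theorem HClose.inv (hone : ∀ x : X, Q.mul one x = x ∧ Q.mul x one = x)
    (hcomm : ∀ x y : X, Q.mul x y = Q.mul y x) {N : Q.Norm} {x x' y y' : X} {r : ℝ}
    (hx : Q.mul x x' = one) (hy : Q.mul y y' = one) (h : HClose N x y r) :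
    HClose N x' y' (N.norm x' * N.norm y' * r) := by
  have hx' : Q.mul (Q.mul x' y') x = y' := by
    rw [hcomm x' y', ← Q.mul_assoc, hcomm x' x, hx, (hone y').2]
  have hy' : Q.mul (Q.mul x' y') y = x' := by
    rw [← Q.mul_assoc, hcomm y' y, hy, (hone x').2]
  have h' := h.mul_left (Q.mul x' y')
  rw [hx', hy'] at h'
  exact (h'.mono (mul_le_mul_of_nonneg_right (N.norm_mul x' y') h.nonneg)).symm

theorem HClose.inv_of_mul_le (hone : ∀ x : X, Q.mul one x = x ∧ Q.mul x one = x)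
    (hcomm : ∀ x y : X, Q.mul x y = Q.mul y x) {N : Q.Norm} {x x' y y' : X} {r M : ℝ}
    (hx : Q.mul x x' = one) (hy : Q.mul y y' = one) (h : HClose N x y r) (hM : N.norm x' ≤ M)
    (hMr : M * r ≤ 1 / 2) :
    HClose N x' y' (2 * M ^ 2 * r) := by
  have h' := h.inv hone hcomm hx hy
  have hr := h.nonneg
  have hy'₀ := N.norm_nonneg y'
  have hy'M : N.norm y' ≤ 2 * M := by
    have hnorm := h'.norm_le
    nlinarith [mul_le_mul_of_nonneg_right hM (mul_nonneg hy'₀ hr)]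
  refine h'.mono ?_
  calc N.norm x' * N.norm y' * r ≤ M * (2 * M) * r := by gcongr; linarith [N.norm_nonneg x']
    _ = 2 * M ^ 2 * r := by ring

theorem exists_hmet_inv_lt (hone : ∀ x : X, Q.mul one x = x ∧ Q.mul x one = x)
    (hcomm : ∀ x y : X, Q.mul x y = Q.mul y x) (N : Q.Norm) {x x' : X} (hx : Q.mul x x' = one)
    {ε : ℝ} (hε : 0 < ε) : ∃ δ > 0, ∀ y y' : X, Q.mul y y' = one →
      Q.hmet N x y < δ → Q.hmet N x' y' < ε := by
  set M := N.norm x' + 1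
  have hM : 0 < M := by linarith [N.norm_nonneg x']
  refine ⟨min (1 / (2 * M)) (ε / (2 * M ^ 2)), by positivity, fun y y' hy hδ => ?_⟩
  by_cases hne : ∃ r, HClose N x y r
  · obtain ⟨r, hrδ, hr⟩ := exists_hClose_lt_of_hmet_lt hne hδ
    have hMr : M * r ≤ 1 / 2 := by
      have := (lt_min_iff.1 hrδ).1
      rw [lt_div_iff₀ (by positivity)] at this
      linarith
    have hrε : 2 * M ^ 2 * r < ε := by
      have := (lt_min_iff.1 hrδ).2
      rwa [lt_div_iff₀ (by positivity), mul_comm] at this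
    exact (hmet_le (hr.inv_of_mul_le hone hcomm hx hy (by linarith) hMr)).trans_lt hrε
  · -- closeness of the inverses would transfer back to `x`, `y`, so `h(x', y') = sInf ∅ = 0`
    rw [hmet_eq_zero_of_forall_not_hClose fun s hs => hne ⟨_, hs.inv hone hcomm
      ((hcomm x' x).trans hx) ((hcomm y' y).trans hy)⟩]
    exact hε

end Units

end QuasiAlgebra

theorem stmt_16_general {X : Type*} [PartialOrder X] (Q : QuasiAlgebra X) (N : Q.Norm)
    (hcomm : ∀ x y : X, Q.mul x y = Q.mul y x)
    (one : X) (hone : ∀ x : X, Q.mul one x = x ∧ Q.mul x one = x)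
    (inv : X → X)
    (hinv : ∀ x : X, (∃ xi : X, Q.mul x xi = one ∧ Q.mul xi x = one) →
      Q.mul x (inv x) = one ∧ Q.mul (inv x) x = one) :
    Set.BijOn inv {x : X | ∃ xi : X, Q.mul x xi = one ∧ Q.mul xi x = one}
      {x : X | ∃ xi : X, Q.mul x xi = one ∧ Q.mul xi x = one} ∧
    (∀ x ∈ {x : X | ∃ xi : X, Q.mul x xi = one ∧ Q.mul xi x = one},
      inv (inv x) = x) ∧
    (∀ x ∈ {x : X | ∃ xi : X, Q.mul x xi = one ∧ Q.mul xi x = one},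
      ∀ ε : ℝ, 0 < ε → ∃ δ : ℝ, 0 < δ ∧
        ∀ y ∈ {x : X | ∃ xi : X, Q.mul x xi = one ∧ Q.mul xi x = one},
          Q.hmet N x y < δ → Q.hmet N (inv x) (inv y) < ε) := by
  set G : Set X := {x : X | ∃ xi : X, Q.mul x xi = one ∧ Q.mul xi x = one}
  have inv_mem : Set.MapsTo inv G G := fun x hx => ⟨x, (hinv x hx).2, (hinv x hx).1⟩
  have inv_inv : ∀ x ∈ G, inv (inv x) = x :=
    fun x hx => QuasiAlgebra.eq_of_mul_eq_one hone (hinv _ (inv_mem hx)).1 (hinv x hx).1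
  refine ⟨Set.InvOn.bijOn ⟨inv_inv, inv_inv⟩ inv_mem inv_mem, inv_inv, fun x hx ε hε => ?_⟩
  obtain ⟨δ, hδ, h⟩ := QuasiAlgebra.exists_hmet_inv_lt hone hcomm N (hinv x hx).1 hε
  exact ⟨δ, hδ, fun y hy => h y (inv y) (hinv y hy).1⟩

/-- in a commutative unital normed quasi-algebra, inversion is a
self-inverse bijection of the group of units `G(X)` which is continuous for the
Hausdorff metric; hence a homeomorphism of `G(X)` onto itself. -/
theorem stmt_16 {X : Type*} [PartialOrder X] (Q : QuasiAlgebra X) (N : Q.Norm)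
    (hcomm : ∀ x y : X, Q.mul x y = Q.mul y x)
    (one : X) (hone : ∀ x : X, Q.mul one x = x ∧ Q.mul x one = x)
    (hnorm1 : N.norm one = 1)
    (inv : X → X)
    (hinv : ∀ x : X, (∃ xi : X, Q.mul x xi = one ∧ Q.mul xi x = one) →
      Q.mul x (inv x) = one ∧ Q.mul (inv x) x = one) :
    Set.BijOn inv {x : X | ∃ xi : X, Q.mul x xi = one ∧ Q.mul xi x = one}
      {x : X | ∃ xi : X, Q.mul x xi = one ∧ Q.mul xi x = one} ∧
    (∀ x ∈ {x : X | ∃ xi : X, Q.mul x xi = one ∧ Q.mul xi x = one},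
      inv (inv x) = x) ∧
    (∀ x ∈ {x : X | ∃ xi : X, Q.mul x xi = one ∧ Q.mul xi x = one},
      ∀ ε : ℝ, 0 < ε → ∃ δ : ℝ, 0 < δ ∧
        ∀ y ∈ {x : X | ∃ xi : X, Q.mul x xi = one ∧ Q.mul xi x = one},
          Q.hmet N x y < δ → Q.hmet N (inv x) (inv y) < ε) :=
  stmt_16_general Q N hcomm one hone inv hinv
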